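/- For every λ ≠ 0 and every Laguerre point (ξ,λ) = (|λ|(2j+n), λ) ∈ ℝ² with j ∈ ℕ, one has ξ ≥ |λ|; moreover for fixed λ ≠ 0, Σ_{j=0}^∞ C(j+n−1, j) (1 + |λ|(2j+n))^{−(n+2)} ≤ C |λ|^{−(n+1)} for a constant C depending only on n. -/

import Mathlib

/-!
Each term is at most `|λ|^{-(n+1)} / (j+1)^2`: the binomial coefficient is at most
`(2j+n)^{n-1}`, and `(1 + |λ|(2j+n))^{-(n+2)} ≤ (|λ|(2j+n))^{-(n+1)}`. Comparing with
`∑ 1/(j+1)^2 = π²/6` gives the bound with `C = π²/6`.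
-/

open Real

lemma hasSum_one_div_nat_add_one_sq :
    HasSum (fun j : ℕ => 1 / ((j : ℝ) + 1) ^ 2) (π ^ 2 / 6) := by
  simpa using (hasSum_nat_add_iff' 1).mpr hasSum_zeta_two

lemma choose_add_sub_one_le_pow (j n : ℕ) : (j + n - 1).choose j ≤ (j + n - 1) ^ (n - 1) := by
  rcases n with _ | m
  · rcases j with _ | j <;> simp
  · rw [Nat.add_succ_sub_one, Nat.choose_symm_add]
    exact Nat.choose_le_pow (j + m) m

lemma one_add_zpow_neg_succ_le {K : Type*} [Field K] [LinearOrder K] [IsStrictOrderedRing K]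
    {x : K} (hx : 0 < x) {m : ℤ} (hm : 0 ≤ m) : (1 + x) ^ (-(m + 1)) ≤ x ^ (-m) :=
  calc (1 + x) ^ (-(m + 1)) ≤ (1 + x) ^ (-m) := zpow_le_zpow_right₀ (by linarith) (by omega)
    _ ≤ x ^ (-m) := by
      rw [zpow_neg, zpow_neg]
      exact inv_anti₀ (zpow_pos hx m) (zpow_le_zpow_left₀ hm hx.le (by linarith))

lemma one_le_two_mul_add {n : ℕ} (hn : 1 ≤ n) (j : ℕ) : (1 : ℝ) ≤ 2 * j + n := by
  have : (1 : ℝ) ≤ n := by exact_mod_cast hn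
  linarith [(j.cast_nonneg : (0 : ℝ) ≤ j)]

lemma laguerre_term_le {n : ℕ} (hn : 1 ≤ n) {L : ℝ} (hL : 0 < L) (j : ℕ) :
    ((j + n - 1).choose j : ℝ) * (1 + L * (2 * j + n)) ^ (-((n : ℤ) + 2))
      ≤ L ^ (-((n : ℤ) + 1)) * (1 / ((j : ℝ) + 1) ^ 2) := by
  have hj : (0 : ℝ) ≤ j := j.cast_nonneg
  obtain ⟨m, rfl⟩ := Nat.exists_eq_add_of_le' hn
  set B : ℝ := 2 * j + (m + 1 : ℕ) with hB_def
  have hjB : (j : ℝ) + 1 ≤ B := by push_cast at hB_def; linarith [(m.cast_nonneg : (0 : ℝ) ≤ m)]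
  have hB : 0 < B := by linarith
  have hchoose : ((j + (m + 1) - 1).choose j : ℝ) ≤ B ^ m :=
    calc ((j + (m + 1) - 1).choose j : ℝ) ≤ ((j + m : ℕ) : ℝ) ^ m := by
          exact_mod_cast choose_add_sub_one_le_pow j (m + 1)
      _ ≤ B ^ m := by gcongr; push_cast at hB_def ⊢; linarith
  calc ((j + (m + 1) - 1).choose j : ℝ) * (1 + L * B) ^ (-(((m + 1 : ℕ) : ℤ) + 2))
      ≤ B ^ m * (L * B) ^ (-(((m + 1 : ℕ) : ℤ) + 1)) := by
        have h := one_add_zpow_neg_succ_le (mul_pos hL hB) (m := ((m + 1 : ℕ) : ℤ) + 1)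
          (by positivity)
        rw [add_assoc, one_add_one_eq_two] at h
        gcongr
    _ = L ^ (-(((m + 1 : ℕ) : ℤ) + 1)) * (1 / B ^ 2) := by
        have e : -(((m + 1 : ℕ) : ℤ) + 1) = -((m + 2 : ℕ) : ℤ) := by push_cast; ring
        rw [e, mul_zpow, zpow_neg, zpow_neg, zpow_natCast, zpow_natCast]
        field_simp
        ring
    _ ≤ L ^ (-(((m + 1 : ℕ) : ℤ) + 1)) * (1 / ((j : ℝ) + 1) ^ 2) := by gcongr

/-- On the Heisenberg fan, every Laguerre point `(ξ,λ) = (|λ|(2j+n), λ)` with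
`λ ≠ 0` satisfies `ξ ≥ |λ|`; moreover
`Σⱼ C(j+n−1,j) (1+|λ|(2j+n))^{−(n+2)} ≤ C |λ|^{−(n+1)}` with `C = C(n)`. -/
theorem fan_laguerre_points_bound (n : ℕ) (hn : 1 ≤ n) :
    (∀ (lam : ℝ), lam ≠ 0 → ∀ j : ℕ, |lam| ≤ |lam| * (2 * j + n)) ∧
    ∃ C : ℝ, 0 < C ∧ ∀ (lam : ℝ), lam ≠ 0 →
      ∑' j : ℕ, ((j + n - 1).choose j : ℝ) * (1 + |lam| * (2 * j + n)) ^ (-((n : ℤ) + 2))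
        ≤ C * |lam| ^ (-((n : ℤ) + 1)) := by
  refine ⟨fun lam _ j => le_mul_of_one_le_right (abs_nonneg lam) (one_le_two_mul_add hn j),
    π ^ 2 / 6, by positivity, fun lam hlam => ?_⟩
  have hL : 0 < |lam| := abs_pos.mpr hlam
  have hbound := hasSum_one_div_nat_add_one_sq.mul_left (|lam| ^ (-((n : ℤ) + 1)))
  have hnonneg (j : ℕ) :
      0 ≤ ((j + n - 1).choose j : ℝ) * (1 + |lam| * (2 * j + n)) ^ (-((n : ℤ) + 2)) := by
    positivity
  have hsummable := Summable.of_nonneg_of_le hnonneg (laguerre_term_le hn hL) hbound.summable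
  rw [mul_comm]
  exact hasSum_le (laguerre_term_le hn hL) hsummable.hasSum hbound
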